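/- Let a locally compact abelian group G with metrizable topology act via α on a complete metric space (X, d) such that d is pseudo G-invariant, let 𝒰 = 𝒰_d be the induced uniformity and 𝒰_mix the mixed uniformity. Then for x ∈ X the following are equivalent: (i) x is Bohr-type almost periodic in (X, 𝒰) (for every U ∈ 𝒰 the set P_U(x) = {t ∈ G : (α(t,x), x) ∈ U} is relatively dense); (ii) x is Bohr-type almost periodic in (X, 𝒰_mix); (iii) x is Bochner-type almost periodic in (X, 𝒰_mix), i.e. the orbit closure of x in the 𝒰_mix-topology is compact; (iv) x is pseudo Bochner-type almost periodic in (X, 𝒰_mix), i.e. for every V ∈ 𝒰_mix the set P_V(x) is finitely relatively dense. -/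

import Mathlib

open Uniformity Pointwise

/-- The basic mixed entourage `V[O,U] = {(α t x, y) : t ∈ O, (x,y) ∈ U}`. -/
def mixEnt {G X : Type*} (α : G → X → X) (O : Set G) (U : Set (X × X)) : Set (X × X) :=
  {p : X × X | ∃ t ∈ O, ∃ q ∈ U, p.1 = α t q.1 ∧ p.2 = q.2}

/-- The mixed uniformity `𝒰_mix`: all supersets of some `V[O,U]` with `U ∈ 𝒰` and `O` an open
set containing `0`. -/
def mixUniformity {G X : Type*} [AddCommGroup G] [TopologicalSpace G] [UniformSpace X]
    (α : G → X → X) : Set (Set (X × X)) :=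
  {V : Set (X × X) | ∃ U ∈ 𝓤 X, ∃ O : Set G, IsOpen O ∧ (0 : G) ∈ O ∧ mixEnt α O U ⊆ V}

/-- A set is open in the topology induced by the mixed uniformity. -/
def mixOpen {G X : Type*} [AddCommGroup G] [TopologicalSpace G] [UniformSpace X]
    (α : G → X → X) (O : Set X) : Prop :=
  ∀ x ∈ O, ∃ V ∈ mixUniformity α, {y : X | (x, y) ∈ V} ⊆ O

/-- The closure of a set in the topology induced by the mixed uniformity. -/
def mixClosure {G X : Type*} [AddCommGroup G] [TopologicalSpace G] [UniformSpace X]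
    (α : G → X → X) (S : Set X) : Set X :=
  {y : X | ∀ V ∈ mixUniformity α, ∃ s ∈ S, (y, s) ∈ V}

/-- Compactness of a set in the topology induced by the mixed uniformity. -/
def mixCompact {G X : Type*} [AddCommGroup G] [TopologicalSpace G] [UniformSpace X]
    (α : G → X → X) (S : Set X) : Prop :=
  ∀ 𝒞 : Set (Set X), (∀ O ∈ 𝒞, mixOpen α O) → S ⊆ ⋃₀ 𝒞 →
    ∃ 𝒞' ⊆ 𝒞, 𝒞'.Finite ∧ S ⊆ ⋃₀ 𝒞'

/-!
Pseudo `G`-invariance of `d` is uniform equicontinuity of the maps `α t`. This makes `𝒰_mix` a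
uniform structure, and makes `(t, y) ↦ α t y` continuous from `G × (X, d)` to `(X, 𝒰_mix)`.

Writing `P_V = {t | (α t x, x) ∈ V}`, one has `P_U ⊆ P_{V[O,U]}`, `P_{V[O,U]} ⊆ P_U + O` and
`P_{V[O,U]} + O' ⊆ P_{V[O + O', U]}`. Since a compact set is covered by finitely many translates
of a neighbourhood of `0`, this gives (i) ⇒ (ii) ⇒ (iv) ⇒ (i).

Condition (iv) says exactly that the orbit of `x` is totally bounded for `𝒰_mix`, because `𝒰_mix`
is invariant under the maps `α t`. So (iii) ⇔ (iv) reduces to the completeness of `𝒰_mix`.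
Take a sequence with `(a n, a (n + 1)) ∈ V[O_n, U_n]`, witnessed by shifts `s n ∈ O_n`. The
corrected points `α (s 0 + ⋯ + s (n - 1)) (a n)` are `d`-Cauchy. If the `O_n` shrink fast
enough, the shifts are summable in `G`, which is complete because it is locally compact.
Continuity of the action then gives the `𝒰_mix`-limit.
-/

open Filter Topology Set

theorem isCompact_iff_finite_subcover_sUnion {Y : Type*} [TopologicalSpace Y] {s : Set Y} :
    IsCompact s ↔ ∀ 𝒞 : Set (Set Y), (∀ O ∈ 𝒞, IsOpen O) → s ⊆ ⋃₀ 𝒞 →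
      ∃ 𝒞' ⊆ 𝒞, 𝒞'.Finite ∧ s ⊆ ⋃₀ 𝒞' := by
  refine ⟨fun hs 𝒞 hopen hcover => ?_,
    isCompact_generateFrom (TopologicalSpace.generateFrom_setOfPred_isOpen _).symm⟩
  rw [sUnion_eq_biUnion] at hcover
  simpa only [sUnion_eq_biUnion, id] using hs.elim_finite_subcover_image (c := id) hopen hcover

section RelativelyDense

variable {G : Type*} [AddCommGroup G]

def IsFinitelyRelativelyDense (A : Set G) : Prop :=
  ∃ F : Set G, F.Finite ∧ A + F = univ

theorem IsFinitelyRelativelyDense.mono {A B : Set G} (hA : IsFinitelyRelativelyDense A)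
    (hAB : A ⊆ B) : IsFinitelyRelativelyDense B :=
  let ⟨F, hF, hAF⟩ := hA
  ⟨F, hF, univ_subset_iff.1 (hAF ▸ add_subset_add_right hAB)⟩

variable [TopologicalSpace G]

def IsRelativelyDense (A : Set G) : Prop :=
  ∃ K : Set G, IsCompact K ∧ A + K = univ

theorem IsRelativelyDense.mono {A B : Set G} (hA : IsRelativelyDense A) (hAB : A ⊆ B) :
    IsRelativelyDense B :=
  let ⟨K, hK, hAK⟩ := hA
  ⟨K, hK, univ_subset_iff.1 (hAK ▸ add_subset_add_right hAB)⟩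

variable [IsTopologicalAddGroup G]

theorem IsRelativelyDense.isFinitelyRelativelyDense_add {A N : Set G} (hA : IsRelativelyDense A)
    (hN : N ∈ 𝓝 0) : IsFinitelyRelativelyDense (A + N) := by
  obtain ⟨K, hK, hAK⟩ := hA
  obtain ⟨t, ht⟩ := compact_covered_by_add_left_translates hK ⟨0, mem_interior_iff_mem_nhds.2 hN⟩
  refine ⟨-(t : Set G), t.finite_toSet.neg, univ_subset_iff.1 ?_⟩
  rw [← hAK, add_assoc]
  refine add_subset_add_left fun k hk => ?_
  obtain ⟨g, hg, hgk⟩ := mem_iUnion₂.1 (ht hk)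
  exact ⟨g + k, hgk, -g, neg_mem_neg.2 hg, add_neg_cancel_comm g k⟩

theorem IsFinitelyRelativelyDense.isRelativelyDense_of_add {A K : Set G}
    (hA : IsFinitelyRelativelyDense (A + K)) (hK : IsCompact K) : IsRelativelyDense A :=
  let ⟨F, hF, hAKF⟩ := hA
  ⟨K + F, hK.add hF.isCompact, by rw [← add_assoc, hAKF]⟩

end RelativelyDense

section HalvingBasis

theorem sum_mem_of_forall_le {M : Type*} [AddCommMonoid M] {u : ℕ → Set M} (hu : Antitone u)
    (h0 : ∀ n, (0 : M) ∈ u n) (hadd : ∀ n, u (n + 1) + u (n + 1) ⊆ u n) {s : ℕ → M}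
    (hs : ∀ n, s n ∈ u (n + 1))
    (t : Finset ℕ) : ∀ n, (∀ j ∈ t, n ≤ j) → ∑ j ∈ t, s j ∈ u n := by
  classical
  refine Finset.induction_on_min t (fun n _ => h0 n) fun a t hat ih n hn => ?_
  rw [Finset.sum_insert fun ha => lt_irrefl a (hat a ha)]
  exact hu (hn a (Finset.mem_insert_self a t))
    (hadd a (add_mem_add (hs a) (ih (a + 1) hat)))

variable {G : Type*} [AddCommGroup G] {u : ℕ → Set G}

theorem summable_of_mem_halving_basis [TopologicalSpace G] [IsTopologicalAddGroup G]
    [LocallyCompactSpace G] (hu : (𝓝 (0 : G)).HasAntitoneBasis u)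
    (hadd : ∀ n, u (n + 1) + u (n + 1) ⊆ u n) {s : ℕ → G} (hs : ∀ n, s n ∈ u (n + 1)) :
    Summable s := by
  let := IsTopologicalAddGroup.rightUniformSpace G
  have := isUniformAddGroup_of_addCommGroup (G := G)
  have := IsRightUniformAddGroup.completeSpace_of_weaklyLocallyCompactSpace (G := G)
  refine summable_iff_vanishing.2 fun e he => ?_
  obtain ⟨n, hn⟩ := hu.mem_iff.1 he
  refine ⟨Finset.range n, fun t ht => hn (sum_mem_of_forall_le hu.antitone
    (fun k => mem_of_mem_nhds (hu.mem k)) hadd hs t n fun j hj => ?_)⟩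
  simpa using Finset.disjoint_left.1 ht hj

end HalvingBasis

section MixedUniformity

variable {G X : Type*} {α : G → X → X}

theorem mixEnt_mono {O O' : Set G} {U U' : Set (X × X)} (hO : O ⊆ O') (hU : U ⊆ U') :
    mixEnt α O U ⊆ mixEnt α O' U' := by
  rintro p ⟨t, ht, q, hq, h⟩
  exact ⟨t, hO ht, q, hU hq, h⟩

theorem mixEnt_image_prod (O : Set G) (U : Set (X × X)) :
    (fun p : G × (X × X) => (α p.1 p.2.1, p.2.2)) '' O ×ˢ U = mixEnt α O U := by
  ext ⟨a, b⟩
  simp only [mem_image, mem_prod, Prod.exists, Prod.mk.injEq, mixEnt, mem_ofPred_eq]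
  aesop

variable [AddCommGroup G]

theorem subset_mixEnt (hzero : ∀ x, α 0 x = x) {O : Set G} (U : Set (X × X)) (h0 : (0 : G) ∈ O) :
    U ⊆ mixEnt α O U :=
  fun p hp => ⟨0, h0, p, hp, (hzero p.1).symm, rfl⟩

theorem mem_mixEnt_iff (hzero : ∀ x, α 0 x = x) (hadd : ∀ s t x, α s (α t x) = α (s + t) x)
    {O : Set G} {U : Set (X × X)} {a b : X} :
    (a, b) ∈ mixEnt α O U ↔ ∃ s ∈ O, (α (-s) a, b) ∈ U := by
  constructor
  · rintro ⟨s, hs, ⟨c, d⟩, hcd, ha : a = α s c, rfl : b = d⟩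
    exact ⟨s, hs, by rwa [ha, hadd, neg_add_cancel, hzero]⟩
  · rintro ⟨s, hs, h⟩
    exact ⟨s, hs, _, h, by rw [hadd, add_neg_cancel, hzero], rfl⟩

variable [TopologicalSpace G] [UniformSpace X]

variable (α) in
def mixFilter : Filter (X × X) :=
  map (fun p : G × (X × X) => (α p.1 p.2.1, p.2.2)) (𝓝 0 ×ˢ 𝓤 X)

theorem hasBasis_mixFilter :
    (mixFilter α).HasBasis (fun i : Set G × Set (X × X) => (0 ∈ i.1 ∧ IsOpen i.1) ∧ i.2 ∈ 𝓤 X)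
      fun i => mixEnt α i.1 i.2 := by
  simpa only [mixFilter, mixEnt_image_prod, id] using
    ((nhds_basis_opens (0 : G)).prod (𝓤 X).basis_sets).map
      (fun p : G × (X × X) => (α p.1 p.2.1, p.2.2))

theorem mem_mixFilter_iff {V : Set (X × X)} : V ∈ mixFilter α ↔ V ∈ mixUniformity α := by
  simp only [hasBasis_mixFilter.mem_iff, mixUniformity, Prod.exists, mem_ofPred_eq]
  aesop

theorem mixEnt_mem_mixUniformity {O : Set G} {U : Set (X × X)} (hO : O ∈ 𝓝 0) (hU : U ∈ 𝓤 X) :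
    mixEnt α O U ∈ mixUniformity α :=
  mem_mixFilter_iff.1 (mixEnt_image_prod O U ▸ image_mem_map (prod_mem_prod hO hU))

variable (hzero : ∀ x, α 0 x = x) (hadd : ∀ s t x, α s (α t x) = α (s + t) x)
  (hα : UniformEquicontinuous α)

include hadd hα in
theorem exists_mixUniformity_act_mem {V : Set (X × X)} (hV : V ∈ mixUniformity α) :
    ∃ W ∈ mixUniformity α, ∀ t a b, (a, b) ∈ W → (α t a, α t b) ∈ V := by
  obtain ⟨U, hU, O, hO, h0, hOU⟩ := hV
  refine ⟨mixEnt α O {p | ∀ t, (α t p.1, α t p.2) ∈ U},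
    mixEnt_mem_mixUniformity (hO.mem_nhds h0) (hα U hU), ?_⟩
  rintro t a b ⟨s, hs, ⟨c, d⟩, hcd, ha : a = α s c, rfl : b = d⟩
  refine hOU ⟨s, hs, (α t c, α t b), hcd t, ?_, rfl⟩
  rw [ha, hadd, hadd, add_comm]

variable [IsTopologicalAddGroup G]

include hzero hadd hα in
theorem mixFilter_swap_mem {V : Set (X × X)} (hV : V ∈ mixFilter α) :
    Prod.swap ⁻¹' V ∈ mixFilter α := by
  obtain ⟨U, hU, O, hO, h0, hOU⟩ := mem_mixFilter_iff.1 hV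
  refine mem_of_superset (mem_mixFilter_iff.2 (mixEnt_mem_mixUniformity
    (neg_mem_nhds_zero G (hO.mem_nhds h0)) (hα _ (symm_le_uniformity hU)))) ?_
  rintro ⟨a, b⟩ ⟨s, hs, ⟨c, d⟩, hcd, ha : a = α s c, rfl : b = d⟩
  refine hOU ⟨-s, hs, (α s b, a), ?_, by rw [hadd, neg_add_cancel, hzero]; rfl, rfl⟩
  rw [ha]
  exact hcd s

include hzero hadd hα in
theorem mixFilter_exists_comp_subset {V : Set (X × X)} (hV : V ∈ mixFilter α) :
    ∃ W ∈ mixFilter α, SetRel.comp W W ⊆ V := by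
  obtain ⟨U, hU, O, hO, h0, hOU⟩ := mem_mixFilter_iff.1 hV
  obtain ⟨N, hN, h0N, hNN⟩ := exists_open_nhds_zero_add_subset (hO.mem_nhds h0)
  obtain ⟨U₁, hU₁, hU₁U⟩ := comp_mem_uniformity_sets hU
  refine ⟨mixEnt α N (U₁ ∩ {p | ∀ t, (α t p.1, α t p.2) ∈ U₁}), mem_mixFilter_iff.2
    (mixEnt_mem_mixUniformity (hN.mem_nhds h0N) (inter_mem hU₁ (hα U₁ hU₁))), ?_⟩
  rintro ⟨a, c⟩ ⟨b, ⟨s, hs, ⟨a', b'⟩, ⟨-, hab⟩, ha : a = α s a', rfl : b = b'⟩,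
    ⟨s', hs', ⟨b'', c'⟩, ⟨hbc, -⟩, hb : b = α s' b'', rfl : c = c'⟩⟩
  refine hOU ⟨s + s', hNN (add_mem_add hs hs'), (α (-s') a', c),
    hU₁U ⟨b'', ?_, hbc⟩, by rw [ha, hadd, add_neg_cancel_right], rfl⟩
  simpa only [hb, hadd, neg_add_cancel, hzero] using hab (-s')

abbrev mixUniformSpace : UniformSpace X :=
  .ofCore (.mk' (mixFilter α) (fun V hV x => by
      obtain ⟨U, hU, O, -, h0, hOU⟩ := mem_mixFilter_iff.1 hV
      exact hOU (subset_mixEnt hzero U h0 (refl_mem_uniformity hU)))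
    (fun _ => mixFilter_swap_mem hzero hadd hα)
    (fun _ => mixFilter_exists_comp_subset hzero hadd hα))

theorem continuous_act_mixUniformSpace :
    @Continuous (G × X) X _ (mixUniformSpace hzero hadd hα).toTopologicalSpace
      fun p => α p.1 p.2 := by
  refine (@continuous_iff_continuousAt _ _ _ (mixUniformSpace hzero hadd hα).toTopologicalSpace
    _).2 fun ⟨t, y⟩ => ?_
  show Tendsto _ (𝓝 (t, y)) (@nhds X (mixUniformSpace hzero hadd hα).toTopologicalSpace (α t y))
  rw [@nhds_eq_comap_uniformity X (mixUniformSpace hzero hadd hα), tendsto_comap_iff]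
  refine hasBasis_mixFilter.tendsto_right_iff.2 ?_
  rintro ⟨O, U⟩ ⟨⟨h0, hO⟩, hU⟩
  have ht : ∀ᶠ t' in 𝓝 t, t - t' ∈ O :=
    (continuous_const.sub continuous_id).tendsto' t 0 (sub_self t) (hO.mem_nhds h0)
  filter_upwards [ht.prod_nhds (UniformSpace.ball_mem_nhds y (hα U hU))] with ⟨t', y'⟩ ⟨ht', hy'⟩
  refine (mem_mixEnt_iff hzero hadd).2 ⟨t - t', ht', ?_⟩
  rw [hadd, neg_sub, sub_add_cancel]
  exact hy' t'

theorem mixOpen_iff_isOpen {S : Set X} :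
    mixOpen α S ↔ IsOpen[(mixUniformSpace hzero hadd hα).toTopologicalSpace] S := by
  rw [@isOpen_iff_ball_subset X (mixUniformSpace hzero hadd hα)]
  exact forall₂_congr fun x _ => exists_congr fun V => and_congr_left' mem_mixFilter_iff.symm

theorem mixClosure_eq_closure (S : Set X) :
    mixClosure α S = closure[(mixUniformSpace hzero hadd hα).toTopologicalSpace] S := by
  ext y
  rw [@UniformSpace.mem_closure_iff_ball X (mixUniformSpace hzero hadd hα)]
  constructor
  · intro h V hV
    obtain ⟨s, hs, hys⟩ := h V (mem_mixFilter_iff.1 hV)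
    exact ⟨s, hys, hs⟩
  · intro h V hV
    obtain ⟨s, hys, hs⟩ := h (mem_mixFilter_iff.2 hV)
    exact ⟨s, hs, hys⟩

theorem mixCompact_iff_isCompact (S : Set X) :
    mixCompact α S ↔ @IsCompact X (mixUniformSpace hzero hadd hα).toTopologicalSpace S := by
  rw [@isCompact_iff_finite_subcover_sUnion X (mixUniformSpace hzero hadd hα).toTopologicalSpace]
  simp only [mixCompact, mixOpen_iff_isOpen hzero hadd hα]

end MixedUniformity

section MixedCompleteness

variable {G X : Type*} [AddCommGroup G] [TopologicalSpace G] [IsTopologicalAddGroup G]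
  [FirstCountableTopology G] [LocallyCompactSpace G] [PseudoMetricSpace X] [CompleteSpace X]
  {α : G → X → X} (hzero : ∀ x, α 0 x = x) (hadd : ∀ s t x, α s (α t x) = α (s + t) x)
  (hα : UniformEquicontinuous α)

theorem completeSpace_mixUniformSpace : @CompleteSpace X (mixUniformSpace hzero hadd hα) := by
  obtain ⟨u, hu, hu_add⟩ := IsTopologicalAddGroup.exists_antitone_basis_nhds_zero G
  choose δ hδ hδα using fun n : ℕ =>
    Metric.uniformEquicontinuous_iff.1 hα ((1 / 2 : ℝ) ^ n) (by positivity)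
  have : (@uniformity X (mixUniformSpace hzero hadd hα)).IsCountablyGenerated :=
    show (map _ (𝓝 0 ×ˢ 𝓤 X)).IsCountablyGenerated by infer_instance
  refine @UniformSpace.complete_of_convergent_controlled_sequences X (mixUniformSpace hzero hadd hα)
    _ (fun n => mixEnt α (interior (u (n + 1))) {p | dist p.1 p.2 < δ n})
    (fun n => mem_mixFilter_iff.2 (mixEnt_mem_mixUniformity (interior_mem_nhds.2 (hu.mem _))
      (Metric.dist_mem_uniformity (hδ n)))) fun a ha => ?_
  choose s hs hsa using fun n => (mem_mixEnt_iff hzero hadd).1 (ha n n (n + 1) le_rfl n.le_succ)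
  obtain ⟨σ, hσ⟩ := summable_of_mem_halving_basis hu hu_add fun n => interior_subset (hs n)
  set S : ℕ → G := fun n => ∑ i ∈ Finset.range n, s i
  have hq : CauchySeq fun n => α (S n) (a n) := by
    refine cauchySeq_of_le_geometric (1 / 2) 1 (by norm_num) fun n => ?_
    have hS : S (n + 1) + -s n = S n := by simp [S, Finset.sum_range_succ]
    have := hδα n _ _ (hsa n) (S (n + 1))
    rw [hadd, hS] at this
    simpa using this.le
  obtain ⟨y, hy⟩ := cauchySeq_tendsto_of_complete hq
  refine ⟨α (-σ) y, ?_⟩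
  refine ((@Continuous.tendsto _ _ _ (mixUniformSpace hzero hadd hα).toTopologicalSpace _
    (continuous_act_mixUniformSpace hzero hadd hα) (-σ, y)).comp
    (hσ.tendsto_sum_nat.neg.prodMk_nhds hy)).congr fun n => ?_
  change α (-S n) (α (S n) (a n)) = a n
  rw [hadd, neg_add_cancel, hzero]

theorem mixCompact_mixClosure_iff_totallyBounded (S : Set X) :
    mixCompact α (mixClosure α S) ↔ @TotallyBounded X (mixUniformSpace hzero hadd hα) S := by
  rw [mixCompact_iff_isCompact hzero hadd hα, mixClosure_eq_closure hzero hadd hα,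
    @isCompact_iff_totallyBounded_isComplete X (mixUniformSpace hzero hadd hα),
    @totallyBounded_closure X (mixUniformSpace hzero hadd hα)]
  exact and_iff_left (@IsClosed.isComplete X (mixUniformSpace hzero hadd hα)
    (completeSpace_mixUniformSpace hzero hadd hα) _
    (@isClosed_closure X (mixUniformSpace hzero hadd hα).toTopologicalSpace S))

end MixedCompleteness

section AlmostPeriodic

variable {G X : Type*} [AddCommGroup G] {α : G → X → X}

def IsPseudoBochnerAlmostPeriodic (α : G → X → X) (𝒰 : Set (Set (X × X))) (x : X) : Prop :=
  ∀ V ∈ 𝒰, IsFinitelyRelativelyDense {t | (α t x, x) ∈ V}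

theorem setOf_mem_mixEnt_subset_add (hzero : ∀ x, α 0 x = x)
    (hadd : ∀ s t x, α s (α t x) = α (s + t) x) (x : X) (O : Set G) (U : Set (X × X)) :
    {t | (α t x, x) ∈ mixEnt α O U} ⊆ {t | (α t x, x) ∈ U} + O := by
  intro t ht
  obtain ⟨s, hs, h⟩ := (mem_mixEnt_iff hzero hadd).1 ht
  exact ⟨-s + t, by rwa [mem_ofPred_eq, ← hadd], s, hs, by simp⟩

theorem setOf_mem_mixEnt_add_subset (hadd : ∀ s t x, α s (α t x) = α (s + t) x) (x : X)
    (O O' : Set G) (U : Set (X × X)) :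
    {t | (α t x, x) ∈ mixEnt α O U} + O' ⊆ {t | (α t x, x) ∈ mixEnt α (O + O') U} := by
  rintro _ ⟨t, ⟨s, hs, ⟨c, d⟩, hcd, h : α t x = α s c, rfl : x = d⟩, o, ho, rfl⟩
  refine ⟨s + o, add_mem_add hs ho, (c, x), hcd, ?_, rfl⟩
  change α (t + o) x = α (s + o) c
  rw [add_comm t o, ← hadd, h, hadd, add_comm]

variable [TopologicalSpace G]

def IsBohrAlmostPeriodic (α : G → X → X) (𝒰 : Set (Set (X × X))) (x : X) : Prop :=
  ∀ V ∈ 𝒰, IsRelativelyDense {t | (α t x, x) ∈ V}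

variable [UniformSpace X] {x : X}

theorem IsBohrAlmostPeriodic.to_mixUniformity (hzero : ∀ x, α 0 x = x)
    (h : IsBohrAlmostPeriodic α (𝓤 X).sets x) : IsBohrAlmostPeriodic α (mixUniformity α) x :=
  fun _ ⟨U, hU, _, _, h0, hOU⟩ => (h U hU).mono fun _ ht => hOU (subset_mixEnt hzero U h0 ht)

variable [IsTopologicalAddGroup G]

theorem IsBohrAlmostPeriodic.isPseudoBochnerAlmostPeriodic
    (hadd : ∀ s t x, α s (α t x) = α (s + t) x) (h : IsBohrAlmostPeriodic α (mixUniformity α) x) :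
    IsPseudoBochnerAlmostPeriodic α (mixUniformity α) x := by
  rintro V ⟨U, hU, O, hO, h0, hOU⟩
  obtain ⟨N, hN, h0N, hNN⟩ := exists_open_nhds_zero_add_subset (hO.mem_nhds h0)
  refine ((h _ (mixEnt_mem_mixUniformity (hN.mem_nhds h0N) hU)).isFinitelyRelativelyDense_add
    (hN.mem_nhds h0N)).mono ?_
  exact (setOf_mem_mixEnt_add_subset hadd x N N U).trans fun t ht =>
    hOU (mixEnt_mono hNN subset_rfl ht)

theorem IsPseudoBochnerAlmostPeriodic.isBohrAlmostPeriodic [LocallyCompactSpace G]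
    (hzero : ∀ x, α 0 x = x) (hadd : ∀ s t x, α s (α t x) = α (s + t) x)
    (h : IsPseudoBochnerAlmostPeriodic α (mixUniformity α) x) :
    IsBohrAlmostPeriodic α (𝓤 X).sets x := by
  intro U hU
  obtain ⟨K, hK, hK0⟩ := exists_compact_mem_nhds (0 : G)
  exact ((h _ (mixEnt_mem_mixUniformity hK0 hU)).mono
    (setOf_mem_mixEnt_subset_add hzero hadd x K U)).isRelativelyDense_of_add hK

theorem isPseudoBochnerAlmostPeriodic_iff_totallyBounded (hzero : ∀ x, α 0 x = x)
    (hadd : ∀ s t x, α s (α t x) = α (s + t) x) (hα : UniformEquicontinuous α) (x : X) :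
    IsPseudoBochnerAlmostPeriodic α (mixUniformity α) x ↔
      @TotallyBounded X (mixUniformSpace hzero hadd hα) (range (α · x)) := by
  rw [@totallyBounded_iff_subset X (mixUniformSpace hzero hadd hα)]
  constructor
  · intro h V hV
    obtain ⟨W, hW, hWV⟩ := exists_mixUniformity_act_mem hadd hα (mem_mixFilter_iff.1 hV)
    obtain ⟨F, hF, hPF⟩ := h W hW
    refine ⟨(α · x) '' F, image_subset_range _ _, hF.image _, ?_⟩
    rintro _ ⟨g, rfl⟩
    obtain ⟨p, hp, f, hf, rfl⟩ := hPF.symm ▸ mem_univ g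
    refine mem_biUnion (mem_image_of_mem _ hf) ?_
    simpa only [mem_ofPred_eq, hadd, add_comm f p] using hWV f _ _ hp
  · intro h V hV
    obtain ⟨W, hW, hWV⟩ := exists_mixUniformity_act_mem hadd hα hV
    obtain ⟨t, hts, ht, hcover⟩ := h W (mem_mixFilter_iff.2 hW)
    obtain ⟨F, -, hF, rfl⟩ := ht.exists_subset_finite_image_eq (image_univ (f := (α · x)) ▸ hts)
    refine ⟨F, hF, eq_univ_of_forall fun g => ?_⟩
    obtain ⟨_, ⟨f, hf, rfl⟩, hgf⟩ := mem_iUnion₂.1 (hcover (mem_range_self g))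
    refine ⟨g - f, ?_, f, hf, sub_add_cancel g f⟩
    have := hWV (-f) _ _ hgf
    rwa [hadd, hadd, neg_add_cancel, hzero, neg_add_eq_sub] at this

end AlmostPeriodic

theorem stmt15_general {G X : Type*}
    [AddCommGroup G] [TopologicalSpace G] [IsTopologicalAddGroup G]
    [LocallyCompactSpace G] [TopologicalSpace.MetrizableSpace G]
    [MetricSpace X] [CompleteSpace X]
    (α : G → X → X)
    (hzero : ∀ x, α 0 x = x)
    (hadd : ∀ s t x, α s (α t x) = α (s + t) x)
    -- the metric is pseudo `G`-invariant
    (hpinv : ∀ ε > (0 : ℝ), ∃ δ > (0 : ℝ), ∀ x y : X, dist x y < δ → ∀ t : G,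
      dist (α t x) (α t y) < ε)
    (x : X) :
    List.TFAE
      [ -- (i) Bohr-type almost periodic in `(X, 𝒰)`
        ∀ U ∈ 𝓤 X, ∃ K : Set G, IsCompact K ∧ {t : G | (α t x, x) ∈ U} + K = Set.univ,
        -- (ii) Bohr-type almost periodic in `(X, 𝒰_mix)`
        ∀ V ∈ mixUniformity α, ∃ K : Set G, IsCompact K ∧
          {t : G | (α t x, x) ∈ V} + K = Set.univ,
        -- (iii) Bochner-type almost periodic in `(X, 𝒰_mix)`: the orbit closure in the
        -- `𝒰_mix`-topology is compact
        mixCompact α (mixClosure α (Set.range fun t : G => α t x)),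
        -- (iv) pseudo Bochner-type almost periodic in `(X, 𝒰_mix)`
        ∀ V ∈ mixUniformity α, ∃ F : Set G, F.Finite ∧
          {t : G | (α t x, x) ∈ V} + F = Set.univ ] := by
  have hα : UniformEquicontinuous α := Metric.uniformEquicontinuous_iff.2 hpinv
  tfae_have 1 → 2 := IsBohrAlmostPeriodic.to_mixUniformity hzero
  tfae_have 2 → 4 := IsBohrAlmostPeriodic.isPseudoBochnerAlmostPeriodic hadd
  tfae_have 4 → 1 := IsPseudoBochnerAlmostPeriodic.isBohrAlmostPeriodic hzero hadd
  tfae_have 3 ↔ 4 := (mixCompact_mixClosure_iff_totallyBounded hzero hadd hα _).trans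
    (isPseudoBochnerAlmostPeriodic_iff_totallyBounded hzero hadd hα x).symm
  tfae_finish

/-- Let a metrizable locally compact abelian group `G` act via `α` on a
complete metric space `(X, d)` with `d` pseudo `G`-invariant, and let `𝒰 = 𝒰_d` be the
induced uniformity. Then Bohr-type almost periodicity in `(X, 𝒰)`, Bohr-type almost
periodicity in `(X, 𝒰_mix)`, Bochner-type almost periodicity in `(X, 𝒰_mix)` and pseudo
Bochner-type almost periodicity in `(X, 𝒰_mix)` are all equivalent. -/
theorem stmt15 {G X : Type*}
    [AddCommGroup G] [TopologicalSpace G] [IsTopologicalAddGroup G]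
    [LocallyCompactSpace G] [T2Space G] [TopologicalSpace.MetrizableSpace G]
    [MetricSpace X] [CompleteSpace X]
    (α : G → X → X)
    (hzero : ∀ x, α 0 x = x)
    (hadd : ∀ s t x, α s (α t x) = α (s + t) x)
    -- the metric is pseudo `G`-invariant
    (hpinv : ∀ ε > (0 : ℝ), ∃ δ > (0 : ℝ), ∀ x y : X, dist x y < δ → ∀ t : G,
      dist (α t x) (α t y) < ε)
    (x : X) :
    List.TFAE
      [ -- (i) Bohr-type almost periodic in `(X, 𝒰)`
        ∀ U ∈ 𝓤 X, ∃ K : Set G, IsCompact K ∧ {t : G | (α t x, x) ∈ U} + K = Set.univ,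
        -- (ii) Bohr-type almost periodic in `(X, 𝒰_mix)`
        ∀ V ∈ mixUniformity α, ∃ K : Set G, IsCompact K ∧
          {t : G | (α t x, x) ∈ V} + K = Set.univ,
        -- (iii) Bochner-type almost periodic in `(X, 𝒰_mix)`: the orbit closure in the
        -- `𝒰_mix`-topology is compact
        mixCompact α (mixClosure α (Set.range fun t : G => α t x)),
        -- (iv) pseudo Bochner-type almost periodic in `(X, 𝒰_mix)`
        ∀ V ∈ mixUniformity α, ∃ F : Set G, F.Finite ∧
          {t : G | (α t x, x) ∈ V} + F = Set.univ ] :=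
  stmt15_general α hzero hadd hpinv x
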